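/- arXiv:1512.06151 — 12 statements merged into one kernel-verified Lean document; each statement's English description precedes it below -/
import Mathlib

section
/- For ε ∈ {1,-1}, δ ∈ {1,-1} and real constants c1, c2, the function u(t,x) = c1 - ε(x + εt) + 4δc2·e^{-(x+εt)/2} + ε c2²·e^{-(x+εt)} satisfies the PDE u_t + (u_x + u_xx)^2 = 0. -/
/-!
The solution is a travelling wave `u t x = c1 + φ (x + ε t)`, which turns the PDE into the ODE
`ε φ' + (φ' + φ'')² = 0` for the profile `φ`. With `e = exp (-ξ/2)` one has
`φ' + φ'' = -ε - δ c2 e`, and `ε φ' + (φ' + φ'')²` collapses to `c2² e² (δ² - ε²)`,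
which vanishes because `δ² = ε² = 1`.
-/

open Real

theorem deriv_travelingWave_time (φ : ℝ → ℝ) (c a x t : ℝ) :
    deriv (fun s => c + φ (x + a * s)) t = a * deriv φ (x + a * t) := by
  rw [deriv_const_add]
  simpa only [smul_eq_mul, deriv_comp_const_add] using
    deriv_comp_mul_left (f := fun y => φ (x + y)) a t

theorem deriv_travelingWave_space (φ : ℝ → ℝ) (c b x : ℝ) :
    deriv (fun y => c + φ (y + b)) x = deriv φ (x + b) := by
  rw [deriv_const_add, deriv_comp_add_const]

theorem travelingWave_pde (φ : ℝ → ℝ) (c a t x : ℝ) (u : ℝ → ℝ → ℝ)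
    (hu : u = fun t x => c + φ (x + a * t)) :
    deriv (fun s => u s x) t
      + (deriv (fun y => u t y) x + deriv (fun y => deriv (fun z => u t z) y) x) ^ 2
      = a * deriv φ (x + a * t)
        + (deriv φ (x + a * t) + deriv (deriv φ) (x + a * t)) ^ 2 := by
  subst hu
  simp only [deriv_travelingWave_time, deriv_travelingWave_space]
  rw [deriv_comp_add_const]

noncomputable def waveProfile (ε δ c : ℝ) (ξ : ℝ) : ℝ :=
  -ε * ξ + 4 * δ * c * exp (-ξ / 2) + ε * c ^ 2 * exp (-ξ)

theorem hasDerivAt_exp_neg_div (k ξ : ℝ) :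
    HasDerivAt (fun ξ => exp (-ξ / k)) (-exp (-ξ / k) / k) ξ := by
  simpa [neg_div, div_eq_mul_inv, mul_comm] using ((hasDerivAt_id ξ).neg.div_const k).exp

theorem deriv_waveProfile (ε δ c : ℝ) :
    deriv (waveProfile ε δ c)
      = fun ξ => -ε - 2 * δ * c * exp (-ξ / 2) - ε * c ^ 2 * exp (-ξ) := by
  funext ξ
  have h := (((hasDerivAt_id ξ).const_mul (-ε)).add
    ((hasDerivAt_exp_neg_div 2 ξ).const_mul (4 * δ * c))).add
    ((hasDerivAt_exp_neg_div 1 ξ).const_mul (ε * c ^ 2))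
  simp only [div_one] at h
  exact (h.congr_deriv (by ring)).deriv

theorem deriv_deriv_waveProfile (ε δ c ξ : ℝ) :
    deriv (deriv (waveProfile ε δ c)) ξ = δ * c * exp (-ξ / 2) + ε * c ^ 2 * exp (-ξ) := by
  have h := ((hasDerivAt_const ξ (-ε)).sub
    ((hasDerivAt_exp_neg_div 2 ξ).const_mul (2 * δ * c))).sub
    ((hasDerivAt_exp_neg_div 1 ξ).const_mul (ε * c ^ 2))
  simp only [div_one] at h
  rw [deriv_waveProfile]
  exact (h.congr_deriv (by ring)).deriv

theorem waveProfile_ode {ε δ : ℝ} (h : δ ^ 2 = ε ^ 2) (c ξ : ℝ) :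
    ε * deriv (waveProfile ε δ c) ξ
      + (deriv (waveProfile ε δ c) ξ + deriv (deriv (waveProfile ε δ c)) ξ) ^ 2 = 0 := by
  have hexp : exp (-ξ / 2) ^ 2 = exp (-ξ) := by rw [← exp_nat_mul]; ring_nf
  rw [deriv_deriv_waveProfile, deriv_waveProfile]
  linear_combination c ^ 2 * δ ^ 2 * hexp + c ^ 2 * exp (-ξ) * h

theorem stmt1 (ε δ c1 c2 : ℝ)
    (hε : ε = 1 ∨ ε = -1)
    (hδ : δ = 1 ∨ δ = -1)
    (u : ℝ → ℝ → ℝ)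
    (hu : ∀ t x : ℝ, u t x = c1 - ε * (x + ε * t) + 4 * δ * c2 * Real.exp (-(x + ε * t) / 2) + ε * c2 ^ 2 * Real.exp (-(x + ε * t))) :
    ∀ t x : ℝ,
      deriv (fun s => u s x) t
      + (deriv (fun y => u t y) x
         + deriv (fun y => deriv (fun z => u t z) y) x) ^ 2 = 0 := by
  intro t x
  have hsq : δ ^ 2 = ε ^ 2 := by
    rcases hε with rfl | rfl <;> rcases hδ with rfl | rfl <;> norm_num
  have hwave : u = fun t x => c1 + waveProfile ε δ c2 (x + ε * t) := by
    funext t x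
    rw [hu, waveProfile]
    ring
  rw [travelingWave_pde (waveProfile ε δ c2) c1 ε t x u hwave]
  exact waveProfile_ode hsq c2 _
end

section
/- For δ ∈ {1,-1} and real constants c1, c2, the function u(t,x) = c1 + 4δ·e^{-x/2} - (t + c2)·e^{-x} satisfies the PDE u_t + (u_x + u_xx)^2 = 0. -/
open Real

lemma hasDerivAt_mul_exp_neg_half_add_mul_exp_neg (a b y : ℝ) :
    HasDerivAt (fun z => a * exp (-z / 2) + b * exp (-z))
      (-(a / 2) * exp (-y / 2) + -b * exp (-y)) y := by
  have hhalf : HasDerivAt (fun z => exp (-z / 2)) (exp (-y / 2) * (-1 / 2)) y :=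
    ((hasDerivAt_id' y).neg.div_const 2).exp
  have hfull : HasDerivAt (fun z => exp (-z)) (exp (-y) * (-1)) y :=
    (hasDerivAt_id' y).neg.exp
  refine ((hhalf.const_mul a).add (hfull.const_mul b)).congr_deriv ?_
  ring

lemma deriv_mul_exp_neg_half_add_mul_exp_neg (a b : ℝ) :
    deriv (fun z => a * exp (-z / 2) + b * exp (-z))
      = fun y => -(a / 2) * exp (-y / 2) + -b * exp (-y) :=
  funext fun y => (hasDerivAt_mul_exp_neg_half_add_mul_exp_neg a b y).deriv

lemma exp_neg_half_sq (x : ℝ) : exp (-x / 2) ^ 2 = exp (-x) := by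
  rw [← exp_nat_mul]
  ring_nf

theorem stmt3 (δ c1 c2 : ℝ)
    (hδ : δ = 1 ∨ δ = -1)
    (u : ℝ → ℝ → ℝ)
    (hu : ∀ t x : ℝ, u t x = c1 + 4 * δ * Real.exp (-x / 2) - (t + c2) * Real.exp (-x)) :
    ∀ t x : ℝ,
      deriv (fun s => u s x) t
      + (deriv (fun y => u t y) x
         + deriv (fun y => deriv (fun z => u t z) y) x) ^ 2 = 0 := by
  intro t x
  have htime : HasDerivAt (fun s => u s x) (-exp (-x)) t := by
    simp only [hu]
    simpa using ((hasDerivAt_id t).add_const c2).mul_const (exp (-x)) |>.const_sub _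
  have hspace : (fun y => u t y)
      = fun y => c1 + (4 * δ * exp (-y / 2) + -(t + c2) * exp (-y)) :=
    funext fun y => by rw [hu]; ring
  have hδ_sq : δ ^ 2 = 1 := by rcases hδ with rfl | rfl <;> norm_num
  simp only [htime.deriv, hspace, deriv_const_add', deriv_mul_exp_neg_half_add_mul_exp_neg]
  -- u_x + u_xx = -δ e^{-x/2}, whose square is δ² e^{-x} = e^{-x}
  linear_combination exp (-x) * hδ_sq + δ ^ 2 * exp_neg_half_sq x
end

section
/- Let 0 < k < 1 and δ ∈ {1,-1}. Then the function u(t,x) = c1 + c2·e^{-x} - (1 + e^{-x}/k)·t + (δ/k)·[(k - e^{-x}/2)·x - 3√(k(k + e^{-x})) + (2k - e^{-x})·log(√k + √(k + e^{-x}))] satisfies the PDE u_t + (u_x + u_xx)^2 = 0 on ℝ × ℝ. -/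
/-!
Write `E = e^{-x}` and `u = (c1 - t) + (c2 - t/k) E + (δ/k) f(x)`. Since `E' + E'' = 0`, the
`x`-dependent coefficient of `E` drops out of `u_x + u_xx`, which is therefore `(δ/k)(f' + f'')`.
The profile `f` is built so that `f' + f'' = √k √(k + E)`, hence
`(u_x + u_xx)^2 = δ² (k + E)/k = 1 + E/k = -u_t`.
-/

open Real

lemma hasDerivAt_exp_neg (y : ℝ) : HasDerivAt (fun z => exp (-z)) (-exp (-y)) y := by
  simpa using (hasDerivAt_neg y).exp

lemma deriv_add_deriv_deriv_of_exp_neg {g g' : ℝ → ℝ} {g'' : ℝ} (a b c x : ℝ)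
    (hg : ∀ y, HasDerivAt g (g' y) y) (hg' : HasDerivAt g' g'' x) :
    deriv (fun y => a + b * exp (-y) + c * g y) x
      + deriv (fun y => deriv (fun z => a + b * exp (-z) + c * g z) y) x = c * (g' x + g'') := by
  have hfirst : ∀ y, HasDerivAt (fun z => a + b * exp (-z) + c * g z)
      (b * -exp (-y) + c * g' y) y := fun y =>
    (((hasDerivAt_exp_neg y).const_mul b).const_add a).add ((hg y).const_mul c)
  have hsecond : HasDerivAt (fun y => b * -exp (-y) + c * g' y) (b * exp (-x) + c * g'') x := by
    refine (((hasDerivAt_exp_neg x).neg.const_mul b).add (hg'.const_mul c)).congr_deriv ?_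
    ring
  rw [(hfirst x).deriv, funext fun y => (hfirst y).deriv, hsecond.deriv]
  ring

section Profile

variable {k : ℝ}

lemma hasDerivAt_sqrt_add_exp_neg (hk : 0 ≤ k) (y : ℝ) :
    HasDerivAt (fun z => √(k + exp (-z))) (-exp (-y) / (2 * √(k + exp (-y)))) y := by
  simpa using ((hasDerivAt_exp_neg y).const_add k).sqrt (by positivity)

lemma hasDerivAt_log_sqrt_add_sqrt_add_exp_neg (hk : 0 ≤ k) (y : ℝ) :
    HasDerivAt (fun z => log (√k + √(k + exp (-z))))
      (√k / (2 * √(k + exp (-y))) - 1 / 2) y := by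
  have hW : 0 < √(k + exp (-y)) := sqrt_pos.mpr (by positivity)
  have hsum : 0 < √k + √(k + exp (-y)) := by positivity
  convert ((hasDerivAt_sqrt_add_exp_neg hk y).const_add √k).log hsum.ne' using 1
  field_simp
  nlinarith [sq_sqrt hk, sq_sqrt (show 0 ≤ k + exp (-y) by positivity)]

/-- The profile `f`, with `√(k (k + e^{-x}))` written as `√k * √(k + e^{-x})`. -/
noncomputable def profile (k x : ℝ) : ℝ :=
  (k - exp (-x) / 2) * x - 3 * (√k * √(k + exp (-x)))
    + (2 * k - exp (-x)) * log (√k + √(k + exp (-x)))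

noncomputable def profileDeriv (k x : ℝ) : ℝ :=
  exp (-x) / 2 * x + √k * √(k + exp (-x)) + exp (-x) * log (√k + √(k + exp (-x)))

lemma hasDerivAt_profile (hk : 0 ≤ k) (y : ℝ) :
    HasDerivAt (profile k) (profileDeriv k y) y := by
  have hW : 0 < √(k + exp (-y)) := sqrt_pos.mpr (by positivity)
  have hW2 : √(k + exp (-y)) ^ 2 = k + exp (-y) := sq_sqrt (by positivity)
  have h := ((((hasDerivAt_exp_neg y).div_const 2).const_sub k).mul (hasDerivAt_id' y)).sub
    (((hasDerivAt_sqrt_add_exp_neg hk y).const_mul √k).const_mul 3) |>.add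
    (((hasDerivAt_exp_neg y).const_sub (2 * k)).mul
      (hasDerivAt_log_sqrt_add_sqrt_add_exp_neg hk y))
  refine h.congr_deriv ?_
  unfold profileDeriv
  field_simp
  linear_combination (-2 * √k) * hW2

lemma hasDerivAt_profileDeriv (hk : 0 ≤ k) (y : ℝ) :
    HasDerivAt (profileDeriv k) (√k * √(k + exp (-y)) - profileDeriv k y) y := by
  have hW : 0 < √(k + exp (-y)) := sqrt_pos.mpr (by positivity)
  have h := ((((hasDerivAt_exp_neg y).div_const 2).mul (hasDerivAt_id' y)).add
    ((hasDerivAt_sqrt_add_exp_neg hk y).const_mul √k)).add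
    ((hasDerivAt_exp_neg y).mul (hasDerivAt_log_sqrt_add_sqrt_add_exp_neg hk y))
  refine h.congr_deriv ?_
  unfold profileDeriv
  field_simp
  ring

end Profile

theorem stmt6_general (k δ c1 c2 : ℝ)
    (hk : 0 < k)
    (hδ : δ = 1 ∨ δ = -1)
    (u : ℝ → ℝ → ℝ)
    (hu : ∀ t x : ℝ, u t x = c1 + c2 * Real.exp (-x) - (1 + Real.exp (-x) / k) * t
      + (δ / k) * ((k - Real.exp (-x) / 2) * x - 3 * Real.sqrt (k * (k + Real.exp (-x)))
        + (2 * k - Real.exp (-x)) * Real.log (Real.sqrt k + Real.sqrt (k + Real.exp (-x))))) :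
    ∀ t x : ℝ,
      deriv (fun s => u s x) t
      + (deriv (fun y => u t y) x
         + deriv (fun y => deriv (fun z => u t z) y) x) ^ 2 = 0 := by
  intro t x
  have hut : (fun y => u t y) =
      fun y => (c1 - t) + (c2 - t / k) * exp (-y) + δ / k * profile k y := by
    funext y
    rw [hu, profile, sqrt_mul hk.le]
    ring
  have hux : HasDerivAt (fun s => u s x) (-(1 + exp (-x) / k)) t := by
    have hlin : (fun s => u s x) = fun s => u 0 x - (1 + exp (-x) / k) * s := by
      funext s
      rw [hu, hu]
      ring
    rw [hlin]
    simpa using ((hasDerivAt_id t).const_mul (1 + exp (-x) / k)).const_sub (u 0 x)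
  rw [hux.deriv, hut, deriv_add_deriv_deriv_of_exp_neg _ _ _ x (hasDerivAt_profile hk.le)
    (hasDerivAt_profileDeriv hk.le x), add_sub_cancel]
  have hδ2 : δ ^ 2 = 1 := by rcases hδ with rfl | rfl <;> norm_num
  have hW2 : √(k + exp (-x)) ^ 2 = k + exp (-x) := sq_sqrt (by positivity)
  rw [mul_pow, mul_pow, div_pow, hδ2, sq_sqrt hk.le, hW2]
  field_simp
  ring

theorem stmt6 (k δ c1 c2 : ℝ)
    (hk : 0 < k)
    (hk1 : k < 1)
    (hδ : δ = 1 ∨ δ = -1)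
    (u : ℝ → ℝ → ℝ)
    (hu : ∀ t x : ℝ, u t x = c1 + c2 * Real.exp (-x) - (1 + Real.exp (-x) / k) * t
      + (δ / k) * ((k - Real.exp (-x) / 2) * x - 3 * Real.sqrt (k * (k + Real.exp (-x)))
        + (2 * k - Real.exp (-x)) * Real.log (Real.sqrt k + Real.sqrt (k + Real.exp (-x))))) :
    ∀ t x : ℝ,
      deriv (fun s => u s x) t
      + (deriv (fun y => u t y) x
         + deriv (fun y => deriv (fun z => u t z) y) x) ^ 2 = 0 :=
  stmt6_general k δ c1 c2 hk hδ u hu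
end

section
/- Let a, b > 0 and c > 0. If v(τ,ξ) satisfies v_τ + (v_ξ + v_ξξ)² = 0, then the function u(t,x) defined implicitly by the change of variables τ = ct, ξ = log(cx/b) - ct, v = bu/(cx) + (a/(2c))·log(cx/b) - (a/2)(1 + a/(2c))·t, i.e. u(t,x) = (cx/b)·[v(ct, log(cx/b) - ct) - (a/(2c))·log(cx/b) + (a/2)(1 + a/(2c))·t], satisfies the nonlinear Black–Scholes equation u_t + a·x²·u_xx + b·x³·(u_xx)² + c·x·u_x - c·u = 0 for t > 0, x > 0. -/
/-! In the log-price coordinate `ξ = log (c x / b) - c t` one has `x ∂ₓ = ∂_ξ` on the bracket of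
`u = (c x / b) [v - (a / (2c)) log (c x / b) + K t]`, `K = (a / 2) (1 + a / (2c))`. This gives
`u_x = u / x + (c / b) (v_ξ - a / (2c))` and `u_xx = (c / (b x)) (v_ξ + v_ξξ - a / (2c))`, so by
completing the square `a x² u_xx + b x³ u_xx² = (c x / b) (c (v_ξ + v_ξξ)² - a² / (4c))`. The term
`c x u_x - c u` cancels the `-c v_ξ` in `u_t`, and `K` is chosen to absorb the remaining constants,
so the Black–Scholes operator applied to `u` is `(c² x / b) (v_τ + (v_ξ + v_ξξ)²) = 0`. -/

open Function Filter Topology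

theorem DifferentiableAt.hasDerivAt_uncurry_comp {f : ℝ → ℝ → ℝ} {p q : ℝ → ℝ} {p' q' s : ℝ}
    (hf : DifferentiableAt ℝ (uncurry f) (p s, q s))
    (hp : HasDerivAt p p' s) (hq : HasDerivAt q q' s) :
    HasDerivAt (fun r => f (p r) (q r))
      (p' * deriv (fun τ => f τ (q s)) (p s) + q' * deriv (f (p s)) (q s)) s := by
  have hD := hf.hasFDerivAt
  have hhor : HasDerivAt (fun τ => (τ, q s)) ((1 : ℝ), (0 : ℝ)) (p s) :=
    (hasDerivAt_id _).prodMk (hasDerivAt_const _ _)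
  have hver : HasDerivAt (fun ξ => (p s, ξ)) ((0 : ℝ), (1 : ℝ)) (q s) :=
    (hasDerivAt_const _ _).prodMk (hasDerivAt_id _)
  have hleft : deriv (fun τ => f τ (q s)) (p s) = fderiv ℝ (uncurry f) (p s, q s) (1, 0) :=
    (hD.comp_hasDerivAt (f := fun τ => (τ, q s)) (p s) hhor).deriv
  have hright : deriv (f (p s)) (q s) = fderiv ℝ (uncurry f) (p s, q s) (0, 1) :=
    (hD.comp_hasDerivAt (f := fun ξ => (p s, ξ)) (q s) hver).deriv
  have hsplit : ((p', q') : ℝ × ℝ) = p' • ((1 : ℝ), (0 : ℝ)) + q' • ((0 : ℝ), (1 : ℝ)) := by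
    simp
  rw [hleft, hright, ← smul_eq_mul, ← smul_eq_mul, ← map_smul, ← map_smul, ← map_add, ← hsplit]
  exact hD.comp_hasDerivAt s (hp.prodMk hq)

theorem hasDerivAt_log_mul_div {b c x : ℝ} (hb : b ≠ 0) (hc : c ≠ 0) (hx : x ≠ 0) :
    HasDerivAt (fun y => Real.log (c * y / b)) x⁻¹ x := by
  have hlin : HasDerivAt (fun y => c * y / b) (c / b) x := by
    simpa using ((hasDerivAt_id x).const_mul c).div_const b
  convert hlin.log (by simp [hb, hc, hx]) using 1
  field_simp

noncomputable def blackScholesTransform (a b c : ℝ) (v : ℝ → ℝ → ℝ) (t x : ℝ) : ℝ :=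
  (c * x / b) * (v (c * t) (Real.log (c * x / b) - c * t)
    - (a / (2 * c)) * Real.log (c * x / b) + (a / 2) * (1 + a / (2 * c)) * t)

section
variable {a b c t x : ℝ} {v : ℝ → ℝ → ℝ}

local notation "ξ" => Real.log (c * x / b) - c * t

theorem hasDerivAt_blackScholesTransform_time
    (hv : DifferentiableAt ℝ (uncurry v) (c * t, ξ)) :
    HasDerivAt (fun s => blackScholesTransform a b c v s x)
      (c * x / b * (c * deriv (fun τ => v τ ξ) (c * t) - c * deriv (v (c * t)) ξ
        + (a / 2) * (1 + a / (2 * c)))) t := by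
  have hτ : HasDerivAt (fun s => c * s) c t := by simpa using (hasDerivAt_id t).const_mul c
  have hv' := hv.hasDerivAt_uncurry_comp hτ (hτ.const_sub (Real.log (c * x / b)))
  have hlin : HasDerivAt (fun s => (a / 2) * (1 + a / (2 * c)) * s)
      ((a / 2) * (1 + a / (2 * c))) t := by
    simpa using (hasDerivAt_id t).const_mul ((a / 2) * (1 + a / (2 * c)))
  refine (((hv'.sub_const ((a / (2 * c)) * Real.log (c * x / b))).add hlin).const_mul
    (c * x / b)).congr_deriv ?_
  ring

theorem hasDerivAt_blackScholesTransform_space (hb : b ≠ 0) (hc : c ≠ 0) (hx : x ≠ 0)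
    (hv : DifferentiableAt ℝ (v (c * t)) ξ) :
    HasDerivAt (blackScholesTransform a b c v t)
      (blackScholesTransform a b c v t x / x + c / b * (deriv (v (c * t)) ξ - a / (2 * c))) x := by
  have hlog := hasDerivAt_log_mul_div hb hc hx
  have hbracket := ((hv.hasDerivAt.comp x (hlog.sub_const (c * t))).sub
    (hlog.const_mul (a / (2 * c)))).add_const ((a / 2) * (1 + a / (2 * c)) * t)
  have hfactor : HasDerivAt (fun y => c * y / b) (c / b) x := by
    simpa using ((hasDerivAt_id x).const_mul c).div_const b
  refine (hfactor.mul hbracket).congr_deriv ?_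
  simp only [blackScholesTransform, Pi.sub_apply, comp_apply]
  field_simp

theorem hasDerivAt_deriv_blackScholesTransform_space (hb : b ≠ 0) (hc : c ≠ 0) (hx : x ≠ 0)
    (hv : Differentiable ℝ (v (c * t))) (hv' : DifferentiableAt ℝ (deriv (v (c * t))) ξ) :
    HasDerivAt (deriv (blackScholesTransform a b c v t))
      (c / (b * x) * (deriv (v (c * t)) ξ + deriv (deriv (v (c * t))) ξ - a / (2 * c))) x := by
  have hux : deriv (blackScholesTransform a b c v t) =ᶠ[𝓝 x] fun y =>
      blackScholesTransform a b c v t y / y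
        + c / b * (deriv (v (c * t)) (Real.log (c * y / b) - c * t) - a / (2 * c)) := by
    filter_upwards [eventually_ne_nhds hx] with y hy
    exact (hasDerivAt_blackScholesTransform_space hb hc hy (hv _)).deriv
  have hlog := hasDerivAt_log_mul_div hb hc hx
  have hquot := (hasDerivAt_blackScholesTransform_space (a := a) hb hc hx (hv _)).div
    (hasDerivAt_id x) hx
  have hpartial := ((hv'.hasDerivAt.comp x (hlog.sub_const (c * t))).sub_const
    (a / (2 * c))).const_mul (c / b)
  refine ((hquot.add hpartial).congr_deriv ?_).congr_of_eventuallyEq hux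
  simp only [id_eq]
  field_simp
  ring

end

theorem stmt9_general (a b c : ℝ) (hb : 0 < b) (hc : 0 < c)
    (v : ℝ → ℝ → ℝ)
    (hv : ContDiff ℝ 2 (Function.uncurry v))
    (hvpde : ∀ τ ξ : ℝ,
      deriv (fun s => v s ξ) τ + (deriv (v τ) ξ + deriv (deriv (v τ)) ξ) ^ 2 = 0)
    (u : ℝ → ℝ → ℝ)
    (hu : ∀ t x : ℝ, u t x = (c * x / b) *
      (v (c * t) (Real.log (c * x / b) - c * t)
        - (a / (2 * c)) * Real.log (c * x / b) + (a / 2) * (1 + a / (2 * c)) * t)) :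
    ∀ t x : ℝ, 0 < t → 0 < x →
      deriv (fun s => u s x) t
      + a * x ^ 2 * deriv (fun y => deriv (fun z => u t z) y) x
      + b * x ^ 3 * (deriv (fun y => deriv (fun z => u t z) y) x) ^ 2 + c * x * deriv (fun y => u t y) x - c * u t x = 0 := by
  intro t x _ hx
  obtain rfl : u = blackScholesTransform a b c v := funext₂ hu
  have hvτ : ContDiff ℝ 2 (v (c * t)) := hv.comp (contDiff_const.prodMk contDiff_id)
  have hvτ' : ContDiff ℝ 1 (deriv (v (c * t))) := (contDiff_succ_iff_deriv.mp hvτ).2.2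
  rw [(hasDerivAt_blackScholesTransform_time (hv.differentiable (by norm_num) _)).deriv,
    (hasDerivAt_deriv_blackScholesTransform_space hb.ne' hc.ne' hx.ne'
      (hvτ.differentiable (by norm_num)) (hvτ'.differentiable one_ne_zero _)).deriv,
    (hasDerivAt_blackScholesTransform_space hb.ne' hc.ne' hx.ne'
      (hvτ.differentiable (by norm_num) _)).deriv]
  field_simp
  linear_combination (4 * c ^ 2 * x) * hvpde (c * t) (Real.log (c * x / b) - c * t)

theorem stmt9 (a b c : ℝ) (ha : 0 < a) (hb : 0 < b) (hc : 0 < c)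
    (v : ℝ → ℝ → ℝ)
    (hv : ContDiff ℝ 2 (Function.uncurry v))
    (hvpde : ∀ τ ξ : ℝ,
      deriv (fun s => v s ξ) τ + (deriv (v τ) ξ + deriv (deriv (v τ)) ξ) ^ 2 = 0)
    (u : ℝ → ℝ → ℝ)
    (hu : ∀ t x : ℝ, u t x = (c * x / b) *
      (v (c * t) (Real.log (c * x / b) - c * t)
        - (a / (2 * c)) * Real.log (c * x / b) + (a / 2) * (1 + a / (2 * c)) * t)) :
    ∀ t x : ℝ, 0 < t → 0 < x →
      deriv (fun s => u s x) t
      + a * x ^ 2 * deriv (fun y => deriv (fun z => u t z) y) x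
      + b * x ^ 3 * (deriv (fun y => deriv (fun z => u t z) y) x) ^ 2 + c * x * deriv (fun y => u t y) x - c * u t x = 0 :=
  stmt9_general a b c hb hc v hv hvpde u hu
end

section
/- Let a, b > 0. If v(τ,ξ) satisfies v_τ + (v_ξ + v_ξξ)² = 0, then u(t,x) = (x/b)·[v(t, log(x/b)) - (a/2)·log(x/b) + (a²/4)·t] satisfies u_t + a·x²·u_xx + b·x³·(u_xx)² = 0 for t > 0, x > 0. -/
/-!
Put `ξ = log (x / b)` and `u = (x / b) w(t, ξ)` with `w = v - (a/2) ξ + (a²/4) t`.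
Then `u_t = (x / b) w_t` and `u_xx = (w_ξ + w_ξξ) / (b x)`, so the nonlinear Black–Scholes
operator applied to `u` equals `(x / b) (w_t + a s + s²)` with `s = w_ξ + w_ξξ = v_ξ + v_ξξ - a/2`.
Completing the square, `w_t + a s + s² = v_t + (v_ξ + v_ξξ)²`, which vanishes.
-/

open Filter Real Topology

section LogarithmicChange

variable {b x : ℝ}

theorem hasDerivAt_log_div (hb : b ≠ 0) (hx : x ≠ 0) :
    HasDerivAt (fun z => log (z / b)) x⁻¹ x := by
  convert ((hasDerivAt_id' x).div_const b).log (div_ne_zero hx hb) using 1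
  field_simp

theorem hasDerivAt_comp_log_div {f : ℝ → ℝ} {f' : ℝ} (hb : b ≠ 0) (hx : x ≠ 0)
    (hf : HasDerivAt f f' (log (x / b))) :
    HasDerivAt (fun z => f (log (z / b))) (f' / x) x :=
  hf.comp x (hasDerivAt_log_div hb hx)

theorem hasDerivAt_div_mul_comp_log_div {f : ℝ → ℝ} {f' : ℝ} (hb : b ≠ 0) (hx : x ≠ 0)
    (hf : HasDerivAt f f' (log (x / b))) :
    HasDerivAt (fun z => z / b * f (log (z / b))) ((f (log (x / b)) + f') / b) x := by
  refine (((hasDerivAt_id' x).div_const b).mul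
    (hasDerivAt_comp_log_div hb hx hf)).congr_deriv ?_
  field_simp

theorem hasDerivAt_deriv_div_mul_comp_log_div {f f' : ℝ → ℝ} {f'' : ℝ} (hb : b ≠ 0) (hx : x ≠ 0)
    (hf : ∀ ξ, HasDerivAt f (f' ξ) ξ) (hf' : HasDerivAt f' f'' (log (x / b))) :
    HasDerivAt (deriv fun z => z / b * f (log (z / b)))
      ((f' (log (x / b)) + f'') / (b * x)) x := by
  have h_deriv : (deriv fun z => z / b * f (log (z / b))) =ᶠ[𝓝 x]
      fun y => (f (log (y / b)) + f' (log (y / b))) / b := by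
    filter_upwards [isOpen_ne.mem_nhds hx] with y hy
    exact (hasDerivAt_div_mul_comp_log_div hb hy (hf _)).deriv
  refine HasDerivAt.congr_of_eventuallyEq ?_ h_deriv
  refine ((hasDerivAt_comp_log_div hb hx ((hf _).add hf')).div_const b).congr_deriv ?_
  field_simp

end LogarithmicChange

theorem stmt10_general (a b : ℝ) (hb : 0 < b)
    (v : ℝ → ℝ → ℝ)
    (hv : ContDiff ℝ 2 (Function.uncurry v))
    (hvpde : ∀ τ ξ : ℝ,
      deriv (fun s => v s ξ) τ + (deriv (v τ) ξ + deriv (deriv (v τ)) ξ) ^ 2 = 0)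
    (u : ℝ → ℝ → ℝ)
    (hu : ∀ t x : ℝ, u t x = (x / b) *
      (v t (Real.log (x / b)) - (a / 2) * Real.log (x / b) + (a ^ 2 / 4) * t)) :
    ∀ t x : ℝ, 0 < t → 0 < x →
      deriv (fun s => u s x) t
      + a * x ^ 2 * deriv (fun y => deriv (fun z => u t z) y) x
      + b * x ^ 3 * (deriv (fun y => deriv (fun z => u t z) y) x) ^ 2 = 0 := by
  intro t x _ hx
  set ξ := log (x / b)
  have hv_time : ContDiff ℝ 2 (fun s => v s ξ) := hv.comp (contDiff_id.prodMk contDiff_const)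
  have hv_space : ContDiff ℝ 2 (v t) := hv.comp (contDiff_const.prodMk contDiff_id)
  have h_time : deriv (fun s => u s x) t = x / b * (deriv (fun s => v s ξ) t + a ^ 2 / 4) := by
    simp only [hu]
    have hvt := (hv_time.differentiable two_ne_zero t).hasDerivAt
    exact ((((hvt.sub_const _).add ((hasDerivAt_id' t).const_mul (a ^ 2 / 4))).const_mul
      (x / b)).congr_deriv (by ring)).deriv
  have h_space : deriv (fun y => deriv (fun z => u t z) y) x
      = (deriv (v t) ξ - a / 2 + deriv (deriv (v t)) ξ) / (b * x) := by
    have hw : ∀ η, HasDerivAt (fun η => v t η - a / 2 * η + a ^ 2 / 4 * t)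
        (deriv (v t) η - a / 2) η := fun η =>
      ((((hv_space.differentiable two_ne_zero) η).hasDerivAt.sub
        ((hasDerivAt_id' η).const_mul (a / 2))).add_const _).congr_deriv (by ring)
    have hw' := ((hv_space.differentiable_deriv_two ξ).hasDerivAt).sub_const (a / 2)
    rw [show (fun z => u t z) = fun z => z / b * (v t (log (z / b)) - a / 2 * log (z / b)
      + a ^ 2 / 4 * t) from funext (hu t)]
    exact (hasDerivAt_deriv_div_mul_comp_log_div hb.ne' hx.ne' hw hw').deriv
  rw [h_time, h_space]
  field_simp
  linear_combination (16 * x) * hvpde t ξ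

theorem stmt10 (a b : ℝ) (ha : 0 < a) (hb : 0 < b)
    (v : ℝ → ℝ → ℝ)
    (hv : ContDiff ℝ 2 (Function.uncurry v))
    (hvpde : ∀ τ ξ : ℝ,
      deriv (fun s => v s ξ) τ + (deriv (v τ) ξ + deriv (deriv (v τ)) ξ) ^ 2 = 0)
    (u : ℝ → ℝ → ℝ)
    (hu : ∀ t x : ℝ, u t x = (x / b) *
      (v t (Real.log (x / b)) - (a / 2) * Real.log (x / b) + (a ^ 2 / 4) * t)) :
    ∀ t x : ℝ, 0 < t → 0 < x →
      deriv (fun s => u s x) t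
      + a * x ^ 2 * deriv (fun y => deriv (fun z => u t z) y) x
      + b * x ^ 3 * (deriv (fun y => deriv (fun z => u t z) y) x) ^ 2 = 0 :=
  stmt10_general a b hb v hv hvpde u hu
end

section
/- Let a, b > 0 and real constants c1, c2. The function u(t,x) = c1 + (a/(2b))·x·(c2 + (a/2)·t - log x) satisfies u_t + a·x²·u_xx + b·x³·(u_xx)² = 0 for x > 0. -/
/-! With `k = a / (2b)`, `u` is affine in `t` with `u_t = k x a / 2`, and `u_xx = -k / x` since
`(x log x)'' = 1 / x`; the equation then collapses to `k x (b k - a / 2) = 0`. -/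

open Real

lemma hasDerivAt_mul_const_sub_log (C : ℝ) {y : ℝ} (hy : y ≠ 0) :
    HasDerivAt (fun z => z * (C - log z)) (C - log y - 1) y := by
  refine ((hasDerivAt_id y).mul ((hasDerivAt_log hy).const_sub C)).congr_deriv ?_
  simp only [id]
  field_simp
  ring

lemma deriv_deriv_mul_const_sub_log (C : ℝ) {x : ℝ} (hx : x ≠ 0) :
    deriv (deriv fun z => z * (C - log z)) x = -x⁻¹ := by
  have h_deriv : deriv (fun z => z * (C - log z)) =ᶠ[nhds x] fun y => C - log y - 1 := by
    filter_upwards [eventually_ne_nhds hx] with y hy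
    exact (hasDerivAt_mul_const_sub_log C hy).deriv
  rw [h_deriv.deriv_eq, deriv_sub_const, deriv_const_sub, deriv_log]

theorem stmt11_general (a b c1 c2 : ℝ)
    (u : ℝ → ℝ → ℝ)
    (hu : ∀ t x : ℝ, u t x = c1 + (a / (2 * b)) * x * (c2 + (a / 2) * t - Real.log x)) :
    ∀ t x : ℝ, 0 < x →
      deriv (fun s => u s x) t
      + a * x ^ 2 * deriv (fun y => deriv (fun z => u t z) y) x
      + b * x ^ 3 * (deriv (fun y => deriv (fun z => u t z) y) x) ^ 2 = 0 := by
  intro t x hx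
  set k := a / (2 * b)
  have hu_t : (fun s => u s x) = fun s => c1 + k * x * (c2 + a / 2 * s - log x) :=
    funext fun s => hu s x
  have hu_x : (fun z => u t z) = fun z => c1 + k * (z * (c2 + a / 2 * t - log z)) :=
    funext fun z => by rw [hu, mul_assoc]
  have h_ut : deriv (fun s => u s x) t = k * x * (a / 2) := by
    rw [hu_t]
    simp
  have h_uxx : deriv (fun y => deriv (fun z => u t z) y) x = k * -x⁻¹ := by
    simp only [hu_x, deriv_const_add', deriv_const_mul_field',
      deriv_deriv_mul_const_sub_log _ hx.ne']
  -- `b * k = a / 2` unless `b = 0`, in which case `k = 0` by the convention `a / 0 = 0`.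
  have hk : k * (b * k - a / 2) = 0 := by
    rcases eq_or_ne b 0 with rfl | hb
    · simp [k]
    · simp only [k]; field_simp; ring
  calc _ = x * (k * (b * k - a / 2)) := by rw [h_ut, h_uxx]; field_simp; ring
    _ = 0 := by rw [hk, mul_zero]

theorem stmt11 (a b c1 c2 : ℝ)
    (ha : 0 < a)
    (hb : 0 < b)
    (u : ℝ → ℝ → ℝ)
    (hu : ∀ t x : ℝ, u t x = c1 + (a / (2 * b)) * x * (c2 + (a / 2) * t - Real.log x)) :
    ∀ t x : ℝ, 0 < x →
      deriv (fun s => u s x) t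
      + a * x ^ 2 * deriv (fun y => deriv (fun z => u t z) y) x
      + b * x ^ 3 * (deriv (fun y => deriv (fun z => u t z) y) x) ^ 2 = 0 :=
  stmt11_general a b c1 c2 u hu
end

section
/- Let a, b > 0, δ ∈ {1,-1}, and real constants c1, c2. The function u(t,x) = c1 - t + 4δ√(x/b) + (a/(2b))·x·(c2 + (a/2)·t - log x) satisfies u_t + a·x²·u_xx + b·x³·(u_xx)² = 0 for x > 0. -/
/-! Write `r = √(x / b)`, so that `x = b r²`. Then `u_t = a² r² / 4 - 1` and
`u_xx = -(δ + a r / 2) / (b² r³)`, hence `a x² u_xx = -a r (δ + a r / 2)` and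
`b x³ u_xx² = (δ + a r / 2)²`. The three terms add up to `δ² - 1`, which vanishes for `δ = ±1`. -/

open Real Topology

namespace NonlinearBlackScholes

variable (a b δ c1 c2 : ℝ)

noncomputable def sol (t x : ℝ) : ℝ :=
  c1 - t + 4 * δ * √(x / b) + a / (2 * b) * x * (c2 + a / 2 * t - log x)

noncomputable def solDerivSpace (t x : ℝ) : ℝ :=
  2 * δ / (b * √(x / b)) + a / (2 * b) * (c2 + a / 2 * t - log x) - a / (2 * b)

theorem hasDerivAt_sol_time (t x : ℝ) :
    HasDerivAt (fun s => sol a b δ c1 c2 s x) (a ^ 2 * x / (4 * b) - 1) t := by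
  have h := (((hasDerivAt_id t).const_mul (a / 2)).const_add c2).sub_const (log x)
  have := (((hasDerivAt_id t).const_sub c1).add_const (4 * δ * √(x / b))).add
    (h.const_mul (a / (2 * b) * x))
  exact this.congr_deriv (by ring)

variable {a b δ c1 c2}

theorem mul_sqrt_div_sq {x : ℝ} (hb : 0 < b) (hx : 0 ≤ x) : b * √(x / b) ^ 2 = x := by
  rw [sq_sqrt (div_nonneg hx hb.le)]
  field_simp

theorem hasDerivAt_sqrt_div {x : ℝ} (hb : 0 < b) (hx : 0 < x) :
    HasDerivAt (fun z => √(z / b)) (1 / (2 * b * √(x / b))) x := by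
  have h := ((hasDerivAt_id x).div_const b).sqrt (div_pos hx hb).ne'
  exact h.congr_deriv (by simp only [id]; field_simp)

theorem hasDerivAt_sol_space (hb : 0 < b) (t : ℝ) {x : ℝ} (hx : 0 < x) :
    HasDerivAt (fun z => sol a b δ c1 c2 t z) (solDerivSpace a b δ c2 t x) x := by
  have hlog := (hasDerivAt_log hx.ne').const_sub (c2 + a / 2 * t)
  have hprod := ((hasDerivAt_id x).const_mul (a / (2 * b))).mul hlog
  have := (((hasDerivAt_sqrt_div hb hx).const_mul (4 * δ)).const_add (c1 - t)).add hprod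
  refine this.congr_deriv ?_
  simp only [id, solDerivSpace]
  field_simp
  ring

theorem hasDerivAt_solDerivSpace (hb : 0 < b) (t : ℝ) {x : ℝ} (hx : 0 < x) :
    HasDerivAt (solDerivSpace a b δ c2 t)
      (-(δ + a * √(x / b) / 2) / (b ^ 2 * √(x / b) ^ 3)) x := by
  have hr : 0 < √(x / b) := sqrt_pos.mpr (div_pos hx hb)
  have hsqrt := ((hasDerivAt_sqrt_div hb hx).const_mul b).inv (by positivity)
  have hlog := ((hasDerivAt_log hx.ne').const_sub (c2 + a / 2 * t)).const_mul (a / (2 * b))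
  have := ((hsqrt.const_mul (2 * δ)).add hlog).sub_const (a / (2 * b))
  refine this.congr_deriv ?_
  have hxr := (mul_sqrt_div_sq hb hx.le).symm
  generalize √(x / b) = r at hr hxr ⊢
  subst hxr
  field_simp
  ring

theorem deriv_deriv_sol_space (hb : 0 < b) (t : ℝ) {x : ℝ} (hx : 0 < x) :
    deriv (fun y => deriv (fun z => sol a b δ c1 c2 t z) y) x
      = -(δ + a * √(x / b) / 2) / (b ^ 2 * √(x / b) ^ 3) := by
  have hev : (fun y => deriv (fun z => sol a b δ c1 c2 t z) y) =ᶠ[𝓝 x] solDerivSpace a b δ c2 t :=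
    Filter.eventually_of_mem (Ioi_mem_nhds hx) fun y hy => (hasDerivAt_sol_space hb t hy).deriv
  rw [hev.deriv_eq]
  exact (hasDerivAt_solDerivSpace hb t hx).deriv

theorem residual_eq_sq_sub_one {x r : ℝ} (hb : b ≠ 0) (hr : r ≠ 0) (hxr : x = b * r ^ 2) :
    (a ^ 2 * x / (4 * b) - 1) + a * x ^ 2 * (-(δ + a * r / 2) / (b ^ 2 * r ^ 3))
      + b * x ^ 3 * (-(δ + a * r / 2) / (b ^ 2 * r ^ 3)) ^ 2 = δ ^ 2 - 1 := by
  subst hxr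
  field_simp
  ring

end NonlinearBlackScholes

open NonlinearBlackScholes in
theorem stmt12_general (a b δ c1 c2 : ℝ)
    (hb : 0 < b)
    (hδ : δ = 1 ∨ δ = -1)
    (u : ℝ → ℝ → ℝ)
    (hu : ∀ t x : ℝ, u t x = c1 - t + 4 * δ * Real.sqrt (x / b) + (a / (2 * b)) * x * (c2 + (a / 2) * t - Real.log x)) :
    ∀ t x : ℝ, 0 < x →
      deriv (fun s => u s x) t
      + a * x ^ 2 * deriv (fun y => deriv (fun z => u t z) y) x
      + b * x ^ 3 * (deriv (fun y => deriv (fun z => u t z) y) x) ^ 2 = 0 := by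
  intro t x hx
  have hu' : u = sol a b δ c1 c2 := funext₂ hu
  have hδ2 : δ ^ 2 = 1 := by rcases hδ with rfl | rfl <;> norm_num
  have hr : √(x / b) ≠ 0 := (sqrt_pos.mpr (div_pos hx hb)).ne'
  rw [hu', (hasDerivAt_sol_time a b δ c1 c2 t x).deriv, deriv_deriv_sol_space hb t hx,
    residual_eq_sq_sub_one hb.ne' hr (mul_sqrt_div_sq hb hx.le).symm, hδ2, sub_self]

theorem stmt12 (a b δ c1 c2 : ℝ)
    (ha : 0 < a)
    (hb : 0 < b)
    (hδ : δ = 1 ∨ δ = -1)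
    (u : ℝ → ℝ → ℝ)
    (hu : ∀ t x : ℝ, u t x = c1 - t + 4 * δ * Real.sqrt (x / b) + (a / (2 * b)) * x * (c2 + (a / 2) * t - Real.log x)) :
    ∀ t x : ℝ, 0 < x →
      deriv (fun s => u s x) t
      + a * x ^ 2 * deriv (fun y => deriv (fun z => u t z) y) x
      + b * x ^ 3 * (deriv (fun y => deriv (fun z => u t z) y) x) ^ 2 = 0 :=
  stmt12_general a b δ c1 c2 hb hδ u hu
end

section
/- Let a, b > 0, ε ∈ {1,-1}, and real constants c1, c2. The function u(t,x) = c1 + ((a + 2ε)/(2b))·x·(c2 + ((a - 2ε)/2)·t - log x) satisfies u_t + a·x²·u_xx + b·x³·(u_xx)² = 0 for x > 0. -/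
theorem stmt13 (a b ε c1 c2 : ℝ)
    (ha : 0 < a)
    (hb : 0 < b)
    (hε : ε = 1 ∨ ε = -1)
    (u : ℝ → ℝ → ℝ)
    (hu : ∀ t x : ℝ, u t x = c1 + ((a + 2 * ε) / (2 * b)) * x * (c2 + ((a - 2 * ε) / 2) * t - Real.log x)) :
    ∀ t x : ℝ, 0 < x →
      deriv (fun s => u s x) t
      + a * x ^ 2 * deriv (fun y => deriv (fun z => u t z) y) x
      + b * x ^ 3 * (deriv (fun y => deriv (fun z => u t z) y) x) ^ 2 = 0 := by
  intro t x hx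
  set K := (a + 2 * ε) / (2 * b) with hK
  set m := (a - 2 * ε) / 2 with hm
  -- time derivative
  have ht : deriv (fun s => u s x) t = K * x * m := by
    have : (fun s => u s x) = fun s => c1 + K * x * (c2 + m * s - Real.log x) := by
      funext s; rw [hu]
    rw [this]
    have h1 : HasDerivAt (fun s : ℝ => c1 + K * x * (c2 + m * s - Real.log x))
        (K * x * m) t := by
      have : HasDerivAt (fun s : ℝ => c2 + m * s - Real.log x) m t := by
        simpa using (((hasDerivAt_id t).const_mul m).const_add c2).sub_const (Real.log x)
      simpa using (this.const_mul (K * x)).const_add c1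
    exact h1.deriv
  -- first space derivative, for all y > 0
  have hfst : ∀ y : ℝ, 0 < y →
      deriv (fun z => u t z) y = K * (c2 + m * t - Real.log y) - K := by
    intro y hy
    have heq : (fun z => u t z) = fun z => c1 + K * z * (c2 + m * t - Real.log z) := by
      funext z; rw [hu]
    rw [heq]
    have h1 : HasDerivAt (fun z : ℝ => c1 + K * z * (c2 + m * t - Real.log z))
        (K * (c2 + m * t - Real.log y) + (K * y) * (-(y⁻¹))) y := by
      have hlog : HasDerivAt (fun z : ℝ => c2 + m * t - Real.log z) (-(y⁻¹)) y := by
        simpa using ((Real.hasDerivAt_log hy.ne').const_sub (c2 + m * t))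
      have hKz : HasDerivAt (fun z : ℝ => K * z) K y := by
        simpa using (hasDerivAt_id y).const_mul K
      simpa [mul_comm, mul_assoc] using (hKz.mul hlog).const_add c1
    rw [h1.deriv]
    field_simp
    ring
  -- second space derivative
  have hsnd : deriv (fun y => deriv (fun z => u t z) y) x = -(K * x⁻¹) := by
    have hev : (fun y => deriv (fun z => u t z) y)
        =ᶠ[nhds x] fun y => K * (c2 + m * t - Real.log y) - K := by
      filter_upwards [eventually_gt_nhds hx] with y hy using hfst y hy
    rw [hev.deriv_eq]
    have h1 : HasDerivAt (fun y : ℝ => K * (c2 + m * t - Real.log y) - K)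
        (-(K * x⁻¹)) x := by
      have hlog : HasDerivAt (fun y : ℝ => c2 + m * t - Real.log y) (-(x⁻¹)) x := by
        simpa using ((Real.hasDerivAt_log hx.ne').const_sub (c2 + m * t))
      simpa [mul_comm] using (hlog.const_mul K).sub_const K
    exact h1.deriv
  rw [ht, hsnd]
  have hbne : (2 * b) ≠ 0 := by positivity
  have hxne : x ≠ 0 := hx.ne'
  have hε2 : ε ^ 2 = 1 := by rcases hε with h | h <;> rw [h] <;> norm_num
  rw [hK, hm]
  field_simp
  ring_nf
end

section
/- Let a, b > 0, ε, δ ∈ {1,-1}, and real constants c1, c2 with c1 > 0. The function u(t,x) = ε·c1²·e^{-εt} + 4δ·c1·e^{-εt/2}·√(x/b) + ((a + 2ε)/(2b))·x·(c2 + ((a - 2ε)/2)·t - log x) satisfies u_t + a·x²·u_xx + b·x³·(u_xx)² = 0 for x > 0. -/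
theorem stmt14 (a b ε δ c1 c2 : ℝ)
    (ha : 0 < a)
    (hb : 0 < b)
    (hε : ε = 1 ∨ ε = -1)
    (hδ : δ = 1 ∨ δ = -1)
    (hc1 : 0 < c1)
    (u : ℝ → ℝ → ℝ)
    (hu : ∀ t x : ℝ, u t x = ε * c1 ^ 2 * Real.exp (-ε * t) + 4 * δ * c1 * Real.exp (-ε * t / 2) * Real.sqrt (x / b)
      + ((a + 2 * ε) / (2 * b)) * x * (c2 + ((a - 2 * ε) / 2) * t - Real.log x)) :
    ∀ t x : ℝ, 0 < x →
      deriv (fun s => u s x) t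
      + a * x ^ 2 * deriv (fun y => deriv (fun z => u t z) y) x
      + b * x ^ 3 * (deriv (fun y => deriv (fun z => u t z) y) x) ^ 2 = 0 := by
  intro t x hx
  have hsb : (0:ℝ) < Real.sqrt b := Real.sqrt_pos.mpr hb
  -- time derivative
  have h1 : HasDerivAt (fun s : ℝ => Real.exp (-ε * s)) (Real.exp (-ε * t) * (-ε * 1)) t :=
    ((hasDerivAt_id t).const_mul (-ε)).exp
  have h2 : HasDerivAt (fun s : ℝ => Real.exp (-ε * s / 2)) (Real.exp (-ε * t / 2) * (-ε * 1 / 2)) t :=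
    (((hasDerivAt_id t).const_mul (-ε)).div_const 2).exp
  have h3 : HasDerivAt (fun s : ℝ => c2 + (a - 2 * ε) / 2 * s - Real.log x) ((a - 2 * ε) / 2 * 1) t :=
    (((hasDerivAt_id t).const_mul ((a - 2 * ε) / 2)).const_add c2).sub_const (Real.log x)
  have hbig : HasDerivAt (fun s : ℝ => ε * c1 ^ 2 * Real.exp (-ε * s)
      + 4 * δ * c1 * Real.exp (-ε * s / 2) * Real.sqrt (x / b)
      + (a + 2 * ε) / (2 * b) * x * (c2 + (a - 2 * ε) / 2 * s - Real.log x))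
      (ε * c1 ^ 2 * (Real.exp (-ε * t) * (-ε * 1))
        + 4 * δ * c1 * (Real.exp (-ε * t / 2) * (-ε * 1 / 2)) * Real.sqrt (x / b)
        + (a + 2 * ε) / (2 * b) * x * ((a - 2 * ε) / 2 * 1)) t :=
    ((h1.const_mul (ε * c1 ^ 2)).add
      ((h2.const_mul (4 * δ * c1)).mul_const (Real.sqrt (x / b)))).add
      (h3.const_mul ((a + 2 * ε) / (2 * b) * x))
  have hdt : deriv (fun s => u s x) t
      = ε * c1 ^ 2 * (Real.exp (-ε * t) * (-ε * 1))
        + 4 * δ * c1 * (Real.exp (-ε * t / 2) * (-ε * 1 / 2)) * Real.sqrt (x / b)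
        + (a + 2 * ε) / (2 * b) * x * ((a - 2 * ε) / 2 * 1) := by
    have heq : (fun s => u s x) = (fun s : ℝ => ε * c1 ^ 2 * Real.exp (-ε * s)
        + 4 * δ * c1 * Real.exp (-ε * s / 2) * Real.sqrt (x / b)
        + (a + 2 * ε) / (2 * b) * x * (c2 + (a - 2 * ε) / 2 * s - Real.log x)) :=
      funext fun s => hu s x
    rw [heq]; exact hbig.deriv
  -- first space derivative, valid at every positive point
  have key : ∀ y : ℝ, 0 < y →
      HasDerivAt (fun z => u t z)
        (4 * δ * c1 * Real.exp (-ε * t / 2) * ((2 * Real.sqrt y)⁻¹ / Real.sqrt b)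
          + (a + 2 * ε) / (2 * b) * (c2 + (a - 2 * ε) / 2 * t - Real.log y - 1)) y := by
    intro y hy
    have hev : (fun z => u t z) =ᶠ[nhds y] (fun z : ℝ => ε * c1 ^ 2 * Real.exp (-ε * t)
        + 4 * δ * c1 * Real.exp (-ε * t / 2) * (Real.sqrt z / Real.sqrt b)
        + (a + 2 * ε) / (2 * b) * (z * (c2 + (a - 2 * ε) / 2 * t - Real.log z))) := by
      filter_upwards [eventually_gt_nhds hy] with z hz
      rw [hu, Real.sqrt_div hz.le]
      ring
    have hA : HasDerivAt (fun z : ℝ => ε * c1 ^ 2 * Real.exp (-ε * t)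
        + 4 * δ * c1 * Real.exp (-ε * t / 2) * (Real.sqrt z / Real.sqrt b))
        (4 * δ * c1 * Real.exp (-ε * t / 2) * (1 / (2 * Real.sqrt y) / Real.sqrt b)) y :=
      (((Real.hasDerivAt_sqrt hy.ne').div_const (Real.sqrt b)).const_mul
        (4 * δ * c1 * Real.exp (-ε * t / 2))).const_add (ε * c1 ^ 2 * Real.exp (-ε * t))
    have hB : HasDerivAt (fun z : ℝ => (a + 2 * ε) / (2 * b) * (z * (c2 + (a - 2 * ε) / 2 * t - Real.log z)))
        ((a + 2 * ε) / (2 * b) * (1 * (c2 + (a - 2 * ε) / 2 * t - Real.log y) + y * -y⁻¹)) y :=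
      ((hasDerivAt_id y).mul ((Real.hasDerivAt_log hy.ne').const_sub (c2 + (a - 2 * ε) / 2 * t))).const_mul
        ((a + 2 * ε) / (2 * b))
    have h := (hA.add hB).congr_of_eventuallyEq hev
    have e : 4 * δ * c1 * Real.exp (-ε * t / 2) * (1 / (2 * Real.sqrt y) / Real.sqrt b)
        + (a + 2 * ε) / (2 * b) * (1 * (c2 + (a - 2 * ε) / 2 * t - Real.log y) + y * -y⁻¹)
        = 4 * δ * c1 * Real.exp (-ε * t / 2) * ((2 * Real.sqrt y)⁻¹ / Real.sqrt b)
          + (a + 2 * ε) / (2 * b) * (c2 + (a - 2 * ε) / 2 * t - Real.log y - 1) := by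
      rw [one_div, show y * -y⁻¹ = -1 by field_simp]
      ring
    exact e ▸ h
  -- second space derivative at x
  have hsx : (0:ℝ) < Real.sqrt x := Real.sqrt_pos.mpr hx
  have hD2 : HasDerivAt (fun y : ℝ => 4 * δ * c1 * Real.exp (-ε * t / 2) * ((2 * Real.sqrt y)⁻¹ / Real.sqrt b)
      + (a + 2 * ε) / (2 * b) * (c2 + (a - 2 * ε) / 2 * t - Real.log y - 1))
      (4 * δ * c1 * Real.exp (-ε * t / 2) * (-(2 * (1 / (2 * Real.sqrt x))) / (2 * Real.sqrt x) ^ 2 / Real.sqrt b)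
        + (a + 2 * ε) / (2 * b) * -x⁻¹) x := by
    have hA2 : HasDerivAt (fun y : ℝ => 4 * δ * c1 * Real.exp (-ε * t / 2) * ((2 * Real.sqrt y)⁻¹ / Real.sqrt b))
        (4 * δ * c1 * Real.exp (-ε * t / 2) * (-(2 * (1 / (2 * Real.sqrt x))) / (2 * Real.sqrt x) ^ 2 / Real.sqrt b)) x :=
      ((((Real.hasDerivAt_sqrt hx.ne').const_mul 2).inv (by positivity)).div_const (Real.sqrt b)).const_mul
        (4 * δ * c1 * Real.exp (-ε * t / 2))
    have hB2 : HasDerivAt (fun y : ℝ => (a + 2 * ε) / (2 * b) * (c2 + (a - 2 * ε) / 2 * t - Real.log y - 1))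
        ((a + 2 * ε) / (2 * b) * -x⁻¹) x :=
      (((Real.hasDerivAt_log hx.ne').const_sub (c2 + (a - 2 * ε) / 2 * t)).sub_const 1).const_mul
        ((a + 2 * ε) / (2 * b))
    exact hA2.add hB2
  have hev2 : (fun y => deriv (fun z => u t z) y) =ᶠ[nhds x]
      (fun y : ℝ => 4 * δ * c1 * Real.exp (-ε * t / 2) * ((2 * Real.sqrt y)⁻¹ / Real.sqrt b)
        + (a + 2 * ε) / (2 * b) * (c2 + (a - 2 * ε) / 2 * t - Real.log y - 1)) := by
    filter_upwards [eventually_gt_nhds hx] with y hy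
    exact (key y hy).deriv
  have hd2 : deriv (fun y => deriv (fun z => u t z) y) x
      = 4 * δ * c1 * Real.exp (-ε * t / 2) * (-(2 * (1 / (2 * Real.sqrt x))) / (2 * Real.sqrt x) ^ 2 / Real.sqrt b)
        + (a + 2 * ε) / (2 * b) * -x⁻¹ := by
    rw [hev2.deriv_eq]; exact hD2.deriv
  rw [hdt, hd2, Real.sqrt_div hx.le,
    show Real.exp (-ε * t) = Real.exp (-ε * t / 2) * Real.exp (-ε * t / 2) by
      rw [← Real.exp_add]; congr 1; ring]
  obtain ⟨s, hs0, rfl⟩ : ∃ s, 0 < s ∧ x = s ^ 2 :=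
    ⟨Real.sqrt x, Real.sqrt_pos.mpr hx, (Real.sq_sqrt hx.le).symm⟩
  obtain ⟨w, hw0, rfl⟩ : ∃ w, 0 < w ∧ b = w ^ 2 :=
    ⟨Real.sqrt b, Real.sqrt_pos.mpr hb, (Real.sq_sqrt hb.le).symm⟩
  rw [Real.sqrt_sq hs0.le, Real.sqrt_sq hw0.le]
  have hF : Real.exp (-ε * t / 2) ≠ 0 := Real.exp_ne_zero _
  rcases hε with rfl | rfl <;> rcases hδ with rfl | rfl <;>
    (field_simp
     ring)
end

section
/- Let a, b, c > 0 and real constants c1, c2. The function u(t,x) = c1·e^{ct} + (a/(2b))·x·(c2 + ((a + 2c)/2)·t - log x) satisfies u_t + a·x²·u_xx + b·x³·(u_xx)² + c·x·u_x - c·u = 0 for x > 0. -/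
/-!
Write `K = a / (2b)`. The exponential part solves `u_t = c u` and is killed by `c (x u_x - u)`
together with its time derivative. For the part `K x (C(t) - log x)` one has `u_xx = -K / x`, so
`a x² u_xx + b x³ u_xx² = K x (b K - a)`, and the remaining terms add up to `K x (a/2 + c) - c K x`;
the sum `K x (b K - a/2)` vanishes because `b K = a / 2`.
-/

open Real Filter

theorem hasDerivAt_const_add_mul_mul_sub_log (A K C : ℝ) {x : ℝ} (hx : x ≠ 0) :
    HasDerivAt (fun z => A + K * z * (C - log z)) (K * (C - log x) - K) x := by
  have h := (((hasDerivAt_id' x).const_mul K).mul ((hasDerivAt_log hx).const_sub C)).const_add A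
  refine h.congr_deriv ?_
  field_simp
  ring

theorem deriv_deriv_const_add_mul_mul_sub_log (A K C : ℝ) {x : ℝ} (hx : x ≠ 0) :
    deriv (fun y => deriv (fun z => A + K * z * (C - log z)) y) x = -K / x := by
  have hfirst : (fun y => deriv (fun z => A + K * z * (C - log z)) y)
      =ᶠ[nhds x] fun y => K * (C - log y) - K := by
    filter_upwards [isOpen_ne.mem_nhds hx] with y hy
    exact (hasDerivAt_const_add_mul_mul_sub_log A K C hy).deriv
  have hsecond : HasDerivAt (fun y => K * (C - log y) - K) (-K / x) x :=
    ((((hasDerivAt_log hx).const_sub C).const_mul K).sub_const K).congr_deriv (by ring)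
  rw [hfirst.deriv_eq, hsecond.deriv]

theorem hasDerivAt_mul_exp_add_mul_affine (B c L C m D t : ℝ) :
    HasDerivAt (fun s => B * exp (c * s) + L * (C + m * s - D))
      (B * (c * exp (c * t)) + L * m) t := by
  have hexp := (((hasDerivAt_id' t).const_mul c).exp).const_mul B
  have hlin := ((((hasDerivAt_id' t).const_mul m).const_add C).sub_const D).const_mul L
  exact (hexp.add hlin).congr_deriv (by ring)

theorem stmt15_general (a b c c1 c2 : ℝ)
    (hb : 0 < b)
    (u : ℝ → ℝ → ℝ)
    (hu : ∀ t x : ℝ, u t x = c1 * Real.exp (c * t) + (a / (2 * b)) * x * (c2 + ((a + 2 * c) / 2) * t - Real.log x)) :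
    ∀ t x : ℝ, 0 < x →
      deriv (fun s => u s x) t
      + a * x ^ 2 * deriv (fun y => deriv (fun z => u t z) y) x
      + b * x ^ 3 * (deriv (fun y => deriv (fun z => u t z) y) x) ^ 2 + c * x * deriv (fun y => u t y) x - c * u t x = 0 := by
  intro t x hx
  simp only [hu]
  rw [(hasDerivAt_mul_exp_add_mul_affine _ _ _ _ _ _ t).deriv,
    deriv_deriv_const_add_mul_mul_sub_log _ _ _ hx.ne',
    (hasDerivAt_const_add_mul_mul_sub_log _ _ _ hx.ne').deriv]
  field_simp
  ring

theorem stmt15 (a b c c1 c2 : ℝ)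
    (ha : 0 < a)
    (hb : 0 < b)
    (hc : 0 < c)
    (u : ℝ → ℝ → ℝ)
    (hu : ∀ t x : ℝ, u t x = c1 * Real.exp (c * t) + (a / (2 * b)) * x * (c2 + ((a + 2 * c) / 2) * t - Real.log x)) :
    ∀ t x : ℝ, 0 < x →
      deriv (fun s => u s x) t
      + a * x ^ 2 * deriv (fun y => deriv (fun z => u t z) y) x
      + b * x ^ 3 * (deriv (fun y => deriv (fun z => u t z) y) x) ^ 2 + c * x * deriv (fun y => u t y) x - c * u t x = 0 :=
  stmt15_general a b c c1 c2 hb u hu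
end

section
/- Let a, b, c > 0, δ ∈ {1,-1}, and real constants c1, c2. The function u(t,x) = (c1 - ct)·e^{ct} + 4δ·e^{ct/2}·√(cx/b) + (a/(2b))·x·(c2 + ((a + 2c)/2)·t - log x) satisfies u_t + a·x²·u_xx + b·x³·(u_xx)² + c·x·u_x - c·u = 0 for x > 0. -/
/-!
For fixed `t`, `u = A + B √x + K x (M - log x)` with `B = 4 δ e^{ct/2} √(c/b)` and `K = a / (2b)`, so
`x² u_xx = -B √x / 4 - K x`. As `b K = a / 2` and `b B² = 16 c e^{ct}` (this is where `δ² = 1` enters),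
`b x³ u_xx² = c e^{ct} + a B √x / 4 + a K x / 2`, while the linear part
`u_t + a x² u_xx + c (x u_x - u)` reduces to `-c e^{ct} - a B √x / 4 - a K x / 2`.
-/

open Real Filter Topology

section SpaceProfile

variable (A B K M : ℝ) {x : ℝ}

lemma hasDerivAt_sqrt_add_mul_log (hx : 0 < x) :
    HasDerivAt (fun y => A + B * √y + K * y * (M - log y))
      (B / (2 * √x) + K * (M - log x - 1)) x := by
  have hsqrt := (hasDerivAt_sqrt hx.ne').const_mul B
  have hlog := ((hasDerivAt_id x).const_mul K).mul ((hasDerivAt_const x M).sub (hasDerivAt_log hx.ne'))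
  refine (((hasDerivAt_const x A).add hsqrt).add hlog).congr_deriv ?_
  simp only [Pi.sub_apply, id]
  field_simp
  ring

lemma hasDerivAt_div_sqrt_add_mul_log (hx : 0 < x) :
    HasDerivAt (fun y => B / (2 * √y) + K * (M - log y - 1))
      (-(B / (4 * x * √x)) - K / x) x := by
  have hs : √x ≠ 0 := (sqrt_pos.2 hx).ne'
  have hinv := (((hasDerivAt_sqrt hx.ne').const_mul 2).inv (by positivity)).const_mul B
  have hlog := (((hasDerivAt_const x M).sub (hasDerivAt_log hx.ne')).sub
    (hasDerivAt_const x 1)).const_mul K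
  refine (hinv.add hlog).congr_deriv ?_
  have hxx : √x * √x = x := mul_self_sqrt hx.le
  field_simp
  linear_combination 4 * B * hxx

lemma deriv_deriv_sqrt_add_mul_log (hx : 0 < x) :
    deriv (fun y => deriv (fun z => A + B * √z + K * z * (M - log z)) y) x
      = -(B / (4 * x * √x)) - K / x := by
  have hfirst : (fun y => deriv (fun z => A + B * √z + K * z * (M - log z)) y)
      =ᶠ[𝓝 x] fun y => B / (2 * √y) + K * (M - log y - 1) := by
    filter_upwards [lt_mem_nhds hx] with y hy
    exact (hasDerivAt_sqrt_add_mul_log A B K M hy).deriv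
  rw [hfirst.deriv_eq]
  exact (hasDerivAt_div_sqrt_add_mul_log B K M hx).deriv

end SpaceProfile

lemma hasDerivAt_mul_exp_add_exp_half (c c1 β P Q t : ℝ) :
    HasDerivAt (fun s => (c1 - c * s) * exp (c * s) + β * exp (c * s / 2) + (P * s + Q))
      (c * (c1 - c * t - 1) * exp (c * t) + c / 2 * β * exp (c * t / 2) + P) t := by
  have hlin : HasDerivAt (fun s => c * s) c t := by
    simpa using (hasDerivAt_id t).const_mul c
  have h1 := ((hasDerivAt_const t c1).sub hlin).mul hlin.exp
  have h2 := (hlin.div_const 2).exp.const_mul β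
  have h3 := ((hasDerivAt_id t).const_mul P).add_const Q
  refine ((h1.add h2).add h3).congr_deriv ?_
  simp only [Pi.sub_apply]
  ring

lemma mul_sq_four_mul_exp_half_mul_sqrt_div {b c δ : ℝ} (hb : 0 < b) (hc : 0 ≤ c) (hδ : δ ^ 2 = 1)
    (t : ℝ) : b * (4 * δ * exp (c * t / 2) * √(c / b)) ^ 2 = 16 * c * exp (c * t) := by
  have hexp : exp (c * t / 2) ^ 2 = exp (c * t) := by rw [← exp_nat_mul]; ring_nf
  rw [mul_pow, mul_pow, mul_pow, hδ, hexp, sq_sqrt (div_nonneg hc hb.le)]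
  field_simp
  ring

theorem stmt16_general (a b c δ c1 c2 : ℝ)
    (hb : 0 < b)
    (hc : 0 < c)
    (hδ : δ = 1 ∨ δ = -1)
    (u : ℝ → ℝ → ℝ)
    (hu : ∀ t x : ℝ, u t x = (c1 - c * t) * Real.exp (c * t) + 4 * δ * Real.exp (c * t / 2) * Real.sqrt (c * x / b)
      + (a / (2 * b)) * x * (c2 + ((a + 2 * c) / 2) * t - Real.log x)) :
    ∀ t x : ℝ, 0 < x →
      deriv (fun s => u s x) t
      + a * x ^ 2 * deriv (fun y => deriv (fun z => u t z) y) x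
      + b * x ^ 3 * (deriv (fun y => deriv (fun z => u t z) y) x) ^ 2 + c * x * deriv (fun y => u t y) x - c * u t x = 0 := by
  intro t x hx
  have hsqrt (z : ℝ) : √(c * z / b) = √(c / b) * √z := by
    rw [mul_div_right_comm, sqrt_mul (div_nonneg hc.le hb.le)]
  obtain ⟨B, hB_def⟩ : ∃ B, B = 4 * δ * exp (c * t / 2) * √(c / b) := ⟨_, rfl⟩
  have hspace : u t = fun z =>
      (c1 - c * t) * exp (c * t) + B * √z + a / (2 * b) * z * (c2 + (a + 2 * c) / 2 * t - log z) := by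
    funext z
    rw [hu, hsqrt, hB_def]
    ring
  have htime : (fun s => u s x) = fun s => (c1 - c * s) * exp (c * s)
      + 4 * δ * √(c / b) * √x * exp (c * s / 2)
      + (a / (2 * b) * x * ((a + 2 * c) / 2) * s + a / (2 * b) * x * (c2 - log x)) := by
    funext s
    rw [hu, hsqrt]
    ring
  have hB : b * B ^ 2 = 16 * c * exp (c * t) := by
    rw [hB_def]
    exact mul_sq_four_mul_exp_half_mul_sqrt_div hb hc.le (by rcases hδ with rfl | rfl <;> norm_num) t
  have hβ : c / 2 * (4 * δ * √(c / b) * √x) * exp (c * t / 2) = c / 2 * B * √x := by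
    rw [hB_def]; ring
  have hxx : √x * √x = x := mul_self_sqrt hx.le
  have hs : √x ≠ 0 := (sqrt_pos.2 hx).ne'
  rw [htime, (hasDerivAt_mul_exp_add_exp_half ..).deriv, hβ, hspace,
    deriv_deriv_sqrt_add_mul_log _ _ _ _ hx, (hasDerivAt_sqrt_add_mul_log _ _ _ _ hx).deriv]
  beta_reduce
  field_simp
  linear_combination 4 * b * x * hB - (32 * c * B * b * √x + 64 * c * exp (c * t) * b) * hxx

theorem stmt16 (a b c δ c1 c2 : ℝ)
    (ha : 0 < a)
    (hb : 0 < b)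
    (hc : 0 < c)
    (hδ : δ = 1 ∨ δ = -1)
    (u : ℝ → ℝ → ℝ)
    (hu : ∀ t x : ℝ, u t x = (c1 - c * t) * Real.exp (c * t) + 4 * δ * Real.exp (c * t / 2) * Real.sqrt (c * x / b)
      + (a / (2 * b)) * x * (c2 + ((a + 2 * c) / 2) * t - Real.log x)) :
    ∀ t x : ℝ, 0 < x →
      deriv (fun s => u s x) t
      + a * x ^ 2 * deriv (fun y => deriv (fun z => u t z) y) x
      + b * x ^ 3 * (deriv (fun y => deriv (fun z => u t z) y) x) ^ 2 + c * x * deriv (fun y => u t y) x - c * u t x = 0 :=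
  stmt16_general a b c δ c1 c2 hb hc hδ u hu
end

section
/- Let a, b, c > 0, ε ∈ {1,-1}, and real constants c1, c2. The function u(t,x) = c1·e^{ct} + ((a + 2εc)/(2b))·x·(c2 + ((a + 2(1-ε)c)/2)·t - log x) satisfies u_t + a·x²·u_xx + b·x³·(u_xx)² + c·x·u_x - c·u = 0 for x > 0. -/
/-!
Substituting the separated ansatz `u = c₁ e^{ct} + K x (c₂ + B t - log x)` into the equation,
the `e^{ct}` terms cancel against `-c u`, and since `u_xx = -K / x` every remaining term is a
multiple of `K x`: the residual is `K x (B + b K - a - c)`. For `K = (a + 2εc) / (2b)` and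
`B = (a + 2(1 - ε)c) / 2` the bracket vanishes.
-/

open Real

section SeparatedAnsatz

variable (c K B c1 c2 : ℝ)

lemma deriv_separatedAnsatz_time (t x : ℝ) :
    deriv (fun s => c1 * exp (c * s) + K * x * (c2 + B * s - log x)) t
      = c * (c1 * exp (c * t)) + K * x * B := by
  have hexp : HasDerivAt (fun s => exp (c * s)) (exp (c * t) * c) t :=
    ((hasDerivAt_id t).const_mul c).exp.congr_deriv (by simp)
  have hlin : HasDerivAt (fun s => c2 + B * s - log x) B t := by
    simpa using (((hasDerivAt_id t).const_mul B).const_add c2).sub_const (log x)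
  exact (((hexp.const_mul c1).add (hlin.const_mul (K * x))).congr_deriv (by ring)).deriv

lemma hasDerivAt_separatedAnsatz_space (t : ℝ) {y : ℝ} (hy : 0 < y) :
    HasDerivAt (fun z => c1 * exp (c * t) + K * z * (c2 + B * t - log z))
      (K * (c2 + B * t - log y) - K) y := by
  have hlog : HasDerivAt (fun z => c2 + B * t - log z) (-y⁻¹) y :=
    (hasDerivAt_log hy.ne').const_sub _
  refine ((((hasDerivAt_id' y).const_mul K).mul hlog).const_add _).congr_deriv ?_
  field_simp
  ring

lemma deriv_deriv_separatedAnsatz_space (t : ℝ) {x : ℝ} (hx : 0 < x) :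
    deriv (fun y => deriv (fun z => c1 * exp (c * t) + K * z * (c2 + B * t - log z)) y) x
      = -(K / x) := by
  have hderiv : (fun y => deriv (fun z => c1 * exp (c * t) + K * z * (c2 + B * t - log z)) y)
      =ᶠ[nhds x] fun y => K * (c2 + B * t - log y) - K := by
    filter_upwards [Ioi_mem_nhds hx] with y hy
    exact (hasDerivAt_separatedAnsatz_space c K B c1 c2 t hy).deriv
  rw [hderiv.deriv_eq, ((((hasDerivAt_log hx.ne').const_sub (c2 + B * t)).const_mul K).sub_const
    K).deriv]
  ring

lemma separatedAnsatz_residual (a b t : ℝ) {x : ℝ} (hx : 0 < x) :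
    let u := fun t x => c1 * exp (c * t) + K * x * (c2 + B * t - log x)
    deriv (fun s => u s x) t
      + a * x ^ 2 * deriv (fun y => deriv (fun z => u t z) y) x
      + b * x ^ 3 * (deriv (fun y => deriv (fun z => u t z) y) x) ^ 2
      + c * x * deriv (fun y => u t y) x - c * u t x
      = K * x * (B + b * K - a - c) := by
  intro u
  simp only [u]
  rw [deriv_separatedAnsatz_time, deriv_deriv_separatedAnsatz_space _ _ _ _ _ _ hx,
    (hasDerivAt_separatedAnsatz_space c K B c1 c2 t hx).deriv]
  field_simp
  ring

end SeparatedAnsatz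

theorem stmt17_general (a b c ε c1 c2 : ℝ)
    (hb : 0 < b)
    (u : ℝ → ℝ → ℝ)
    (hu : ∀ t x : ℝ, u t x = c1 * Real.exp (c * t) + ((a + 2 * ε * c) / (2 * b)) * x *
      (c2 + ((a + 2 * (1 - ε) * c) / 2) * t - Real.log x)) :
    ∀ t x : ℝ, 0 < x →
      deriv (fun s => u s x) t
      + a * x ^ 2 * deriv (fun y => deriv (fun z => u t z) y) x
      + b * x ^ 3 * (deriv (fun y => deriv (fun z => u t z) y) x) ^ 2 + c * x * deriv (fun y => u t y) x - c * u t x = 0 := by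
  intro t x hx
  obtain rfl : u = _ := funext fun t => funext (hu t)
  rw [separatedAnsatz_residual c _ _ c1 c2 a b t hx]
  have hbracket : (a + 2 * (1 - ε) * c) / 2 + b * ((a + 2 * ε * c) / (2 * b)) - a - c = 0 := by
    field_simp
    ring
  rw [hbracket, mul_zero]

theorem stmt17 (a b c ε c1 c2 : ℝ)
    (ha : 0 < a)
    (hb : 0 < b)
    (hc : 0 < c)
    (hε : ε = 1 ∨ ε = -1)
    (u : ℝ → ℝ → ℝ)
    (hu : ∀ t x : ℝ, u t x = c1 * Real.exp (c * t) + ((a + 2 * ε * c) / (2 * b)) * x *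
      (c2 + ((a + 2 * (1 - ε) * c) / 2) * t - Real.log x)) :
    ∀ t x : ℝ, 0 < x →
      deriv (fun s => u s x) t
      + a * x ^ 2 * deriv (fun y => deriv (fun z => u t z) y) x
      + b * x ^ 3 * (deriv (fun y => deriv (fun z => u t z) y) x) ^ 2 + c * x * deriv (fun y => u t y) x - c * u t x = 0 :=
  stmt17_general a b c ε c1 c2 hb u hu
end
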